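/- Let V be a finite-dimensional complex vector space with a finite descending filtration, let □ : V → V be filtration preserving, let P be the spectral projection of □ onto the generalized zero eigenspace, let P̃ be the spectral projection of gr(□) onto the generalized zero eigenspace, and let S : gr(V) → V be a splitting of the filtration. Then L := P∘S∘P̃ + (id_V − P)∘S∘(id_{gr(V)} − P̃) : gr(V) → V is a filtration preserving bijection whose inverse is filtration preserving, gr(L) = id_{gr(V)}, and L^{-1}∘P∘L = P̃. In particular, L restricts to a linear isomorphism from im(P̃) onto im(P) and to a linear isomorphism from ker(P̃) onto ker(P). -/

import Mathlib

open DirectSum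

/-- The `p`-th graded component `V^p/V^{p+1}` of a filtered vector space. -/
abbrev GrC {V : Type*} [AddCommGroup V] [Module ℂ V] (Vf : ℤ → Submodule ℂ V) (p : ℤ) :=
  (Vf p) ⧸ (Vf (p + 1)).comap (Vf p).subtype

/-- The map induced on the `p`-th graded component by a filtration preserving endomorphism. -/
noncomputable def grComponent {V : Type*} [AddCommGroup V] [Module ℂ V]
    (Vf : ℤ → Submodule ℂ V)
    (A : V →ₗ[ℂ] V) (hA : ∀ p : ℤ, ∀ v ∈ Vf p, A v ∈ Vf p) (p : ℤ) :
    GrC Vf p →ₗ[ℂ] GrC Vf p :=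
  Submodule.mapQ _ _ (A.restrict (hA p)) (fun v hv => by
    have : A (v : V) ∈ Vf (p + 1) := hA (p + 1) (v : V) (by simpa using hv)
    simpa [Submodule.mem_comap] using this)

/-- The map `gr(A)` induced on the associated graded `gr(V) = ⨁ₚ V^p/V^{p+1}`. -/
noncomputable def grMap {V : Type*} [AddCommGroup V] [Module ℂ V]
    (Vf : ℤ → Submodule ℂ V)
    (A : V →ₗ[ℂ] V) (hA : ∀ p : ℤ, ∀ v ∈ Vf p, A v ∈ Vf p) :
    (⨁ p : ℤ, GrC Vf p) →ₗ[ℂ] ⨁ p : ℤ, GrC Vf p :=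
  DirectSum.toModule ℂ ℤ _ fun p =>
    (DirectSum.lof ℂ ℤ (fun q => GrC Vf q) p) ∘ₗ grComponent Vf A hA p

/-- `P` is the spectral projection of `B` onto the generalized zero eigenspace. -/
def IsGenZeroProj {V : Type*} [AddCommGroup V] [Module ℂ V] (B P : V →ₗ[ℂ] V) : Prop :=
  (∀ v ∈ Module.End.maxGenEigenspace B 0, P v = v) ∧
  (∀ μ : ℂ, μ ≠ 0 → ∀ v ∈ Module.End.maxGenEigenspace B μ, P v = 0)

/-- The natural filtration on the associated graded vector space `gr(V)`:
`gr^q(V) = ⨁_{p ≥ q} V^p/V^{p+1}`. -/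
noncomputable def GrF {V : Type*} [AddCommGroup V] [Module ℂ V]
    (Vf : ℤ → Submodule ℂ V) (q : ℤ) : Submodule ℂ (⨁ p : ℤ, GrC Vf p) :=
  ⨆ p : ℤ, ⨆ _ : q ≤ p, LinearMap.range (DirectSum.lof ℂ ℤ (fun r => GrC Vf r) p)

/-- The operator `L := P∘S∘P̃ + (id − P)∘S∘(id − P̃) : gr(V) → V`. -/
noncomputable def Lop {V : Type*} [AddCommGroup V] [Module ℂ V]
    (Vf : ℤ → Submodule ℂ V) (P : V →ₗ[ℂ] V)
    (Ptil : (⨁ p : ℤ, GrC Vf p) →ₗ[ℂ] ⨁ p : ℤ, GrC Vf p)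
    (S : (⨁ p : ℤ, GrC Vf p) →ₗ[ℂ] V) : (⨁ p : ℤ, GrC Vf p) →ₗ[ℂ] V :=
  P ∘ₗ S ∘ₗ Ptil + (LinearMap.id - P) ∘ₗ S ∘ₗ (@HSub.hSub _ _ _ (@instHSub _ (LinearMap.instSub (N₂ := ⨁ p : ℤ, GrC Vf p))) LinearMap.id Ptil)

/-- The additive group structure on `GrC Vf p`, used as a local instance. -/
@[reducible] def GrC.addCommGroup' {V : Type*} [AddCommGroup V] [Module ℂ V] (Vf : ℤ → Submodule ℂ V) (p : ℤ) :
    AddCommGroup (GrC Vf p) := Submodule.Quotient.addCommGroup _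

/- ### Auxiliary lemmas ### -/

section Spectral
variable {V : Type*} [AddCommGroup V] [Module ℂ V] [FiniteDimensional ℂ V]

lemma ext_of_maxGen {B f g : V →ₗ[ℂ] V}
    (h : ∀ μ : ℂ, ∀ v ∈ Module.End.maxGenEigenspace B μ, f v = g v) : f = g := by
  have htop := Module.End.iSup_maxGenEigenspace_eq_top (f := (B : Module.End ℂ V))
  have h2 : ⊤ ≤ LinearMap.eqLocus f g := by
    rw [← htop]
    exact iSup_le fun μ v hv => LinearMap.mem_eqLocus.mpr (h μ v hv)
  exact LinearMap.ext fun v => h2 Submodule.mem_top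

lemma IsGenZeroProj.unique {B P P' : V →ₗ[ℂ] V} (hP : IsGenZeroProj B P)
    (hP' : IsGenZeroProj B P') : P = P' := by
  apply ext_of_maxGen (B := B)
  intro μ v hv
  rcases eq_or_ne μ 0 with rfl | hμ
  · rw [hP.1 v hv, hP'.1 v hv]
  · rw [hP.2 μ hμ v hv, hP'.2 μ hμ v hv]

-- the sum B + P is bijective
lemma IsGenZeroProj.bijective_add {B P : V →ₗ[ℂ] V} (hP : IsGenZeroProj B P) :
    Function.Bijective (B + P) := by
  set A := B + P with hA
  have hsurj : Function.Surjective A := by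
    rw [← LinearMap.range_eq_top]
    rw [eq_top_iff, ← Module.End.iSup_maxGenEigenspace_eq_top (f := (B : Module.End ℂ V))]
    refine iSup_le fun μ => ?_
    set W := Module.End.maxGenEigenspace B μ with hW
    have hWB : ∀ v ∈ W, B v ∈ W := fun v hv =>
      Module.End.mapsTo_maxGenEigenspace_of_comm (Commute.refl B) μ hv
    have hWP : ∀ v ∈ W, P v ∈ W := by
      intro v hv
      rcases eq_or_ne μ 0 with rfl | hμ
      · rw [hP.1 v hv]; exact hv
      · rw [hP.2 μ hμ v hv]; exact Submodule.zero_mem _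
    have hWA : ∀ v ∈ W, A v ∈ W := fun v hv => by
      simpa [hA] using Submodule.add_mem _ (hWB v hv) (hWP v hv)
    have hinj : Function.Injective (A.restrict hWA) := by
      rw [← LinearMap.ker_eq_bot, eq_bot_iff]
      intro w hw
      simp only [LinearMap.mem_ker] at hw
      have hw0 : A (w : V) = 0 := by
        have := congrArg (Subtype.val) hw
        simpa [LinearMap.restrict_apply] using this
      rcases eq_or_ne μ 0 with rfl | hμ
      · -- B w + w = 0, so w is in the (-1)-eigenspace
        have hPw : P (w : V) = (w : V) := hP.1 _ w.2
        have h1 : (w : V) ∈ Module.End.genEigenspace B (-1) (1:ℕ) := by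
          rw [Module.End.mem_genEigenspace_nat]
          simp only [LinearMap.mem_ker, pow_one, LinearMap.sub_apply, LinearMap.smul_apply,
            Module.End.one_apply]
          have : B (w : V) + (w : V) = 0 := by
            simpa [hA, hPw] using hw0
          simpa [neg_smul, sub_neg_eq_add] using this
        have hd := Module.End.disjoint_genEigenspace (f := (B : Module.End ℂ V))
          (show (-1 : ℂ) ≠ 0 by norm_num) (1:ℕ) ⊤
        have : (w : V) = 0 := (Submodule.mem_bot ℂ).mp (hd.le_bot (Submodule.mem_inf.mpr ⟨h1, w.2⟩))
        exact Subtype.ext (by simpa using this)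
      · have hPw : P (w : V) = 0 := hP.2 μ hμ _ w.2
        have h1 : (w : V) ∈ Module.End.genEigenspace B 0 (1:ℕ) := by
          rw [Module.End.mem_genEigenspace_nat]
          simp only [LinearMap.mem_ker, pow_one, LinearMap.sub_apply, LinearMap.smul_apply,
            Module.End.one_apply, zero_smul, sub_zero]
          simpa [hA, hPw] using hw0
        have hd := Module.End.disjoint_genEigenspace (f := (B : Module.End ℂ V)) (Ne.symm hμ) (1:ℕ) ⊤
        have : (w : V) = 0 := (Submodule.mem_bot ℂ).mp (hd.le_bot (Submodule.mem_inf.mpr ⟨h1, w.2⟩))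
        exact Subtype.ext (by simpa using this)
    have hsurjW : Function.Surjective (A.restrict hWA) :=
      (LinearMap.injective_iff_surjective).mp hinj
    intro v hv
    obtain ⟨u, hu⟩ := hsurjW ⟨v, hv⟩
    exact ⟨(u : V), by simpa [LinearMap.restrict_apply] using congrArg Subtype.val hu⟩
  exact ⟨(LinearMap.injective_iff_surjective).mpr hsurj, hsurj⟩

end Spectral

section C
variable {V : Type*} [AddCommGroup V] [Module ℂ V] [FiniteDimensional ℂ V]

lemma IsGenZeroProj.idem' {B P : V →ₗ[ℂ] V} (hP : IsGenZeroProj B P) : P ∘ₗ P = P := by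
  apply ext_of_maxGen (B := B)
  intro μ v hv
  rcases eq_or_ne μ 0 with rfl | hμ
  · simp [hP.1 v hv]
  · simp [hP.2 μ hμ v hv]

lemma IsGenZeroProj.comm' {B P : V →ₗ[ℂ] V} (hP : IsGenZeroProj B P) : P ∘ₗ B = B ∘ₗ P := by
  apply ext_of_maxGen (B := B)
  intro μ v hv
  have hBv : B v ∈ Module.End.maxGenEigenspace B μ :=
    Module.End.mapsTo_maxGenEigenspace_of_comm (Commute.refl B) μ hv
  rcases eq_or_ne μ 0 with rfl | hμ
  · simp [hP.1 _ hBv, hP.1 v hv]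
  · simp [hP.2 μ hμ _ hBv, hP.2 μ hμ v hv]

lemma IsGenZeroProj.invariant' {B P : V →ₗ[ℂ] V} (hP : IsGenZeroProj B P)
    {W : Submodule ℂ V} (hW : ∀ v ∈ W, B v ∈ W) : ∀ v ∈ W, P v ∈ W := by
  intro v hv
  set B' := B.restrict hW with hB'
  have hmax : ∀ μ : ℂ, ∀ w : W, w ∈ Module.End.maxGenEigenspace B' μ →
      (w : V) ∈ Module.End.maxGenEigenspace B μ := by
    intro μ w hw
    rw [Module.End.maxGenEigenspace, Module.End.genEigenspace_restrict] at hw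
    exact hw
  have h2 : ⊤ ≤ Submodule.comap (P ∘ₗ W.subtype) W := by
    rw [← Module.End.iSup_maxGenEigenspace_eq_top (f := (B' : Module.End ℂ W))]
    refine iSup_le fun μ w hw => ?_
    have := hmax μ w hw
    rcases eq_or_ne μ 0 with rfl | hμ
    · simpa [Submodule.mem_comap, hP.1 _ this] using w.2
    · simp [Submodule.mem_comap, hP.2 μ hμ _ this]
  exact h2 (Submodule.mem_top (x := (⟨v, hv⟩ : W)))

lemma IsGenZeroProj.exists_C {B P : V →ₗ[ℂ] V} (hP : IsGenZeroProj B P)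
    (Vf : ℤ → Submodule ℂ V) (hB : ∀ p : ℤ, ∀ v ∈ Vf p, B v ∈ Vf p) :
    ∃ C : V →ₗ[ℂ] V, (∀ p : ℤ, ∀ v ∈ Vf p, C v ∈ Vf p) ∧
      C ∘ₗ B = LinearMap.id - P ∧ C ∘ₗ P = 0 := by
  have hidem : ∀ v, P (P v) = P v := LinearMap.ext_iff.mp hP.idem'
  have hcomm : ∀ v, P (B v) = B (P v) := LinearMap.ext_iff.mp hP.comm'
  set A := B + P with hA
  have hbij := hP.bijective_add
  set e := LinearEquiv.ofBijective A hbij with he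
  have heapp : ∀ v, e v = A v := fun v => rfl
  have hPfp : ∀ p : ℤ, ∀ v ∈ Vf p, P v ∈ Vf p := fun p => hP.invariant' (hB p)
  have hAfp : ∀ p : ℤ, ∀ v ∈ Vf p, A v ∈ Vf p := fun p v hv => by
    simpa [hA] using Submodule.add_mem _ (hB p v hv) (hPfp p v hv)
  have hmapA : ∀ p : ℤ, Submodule.map (e : V →ₗ[ℂ] V) (Vf p) = Vf p := by
    intro p
    apply Submodule.eq_of_le_of_finrank_le
    · rintro _ ⟨v, hv, rfl⟩; exact hAfp p v hv
    · rw [LinearEquiv.finrank_map_eq]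
  have hsymmfp : ∀ p : ℤ, ∀ v ∈ Vf p, e.symm v ∈ Vf p := by
    intro p v hv
    rw [← hmapA p] at hv
    obtain ⟨w, hw, rfl⟩ := hv
    simpa using hw
  set D : V →ₗ[ℂ] V := LinearMap.id - P with hD
  refine ⟨e.symm.toLinearMap ∘ₗ D, ?_, ?_, ?_⟩
  · intro p v hv
    have : D v ∈ Vf p := by
      simpa [hD] using Submodule.sub_mem _ hv (hPfp p v hv)
    simpa using hsymmfp p _ this
  · apply LinearMap.ext
    intro v
    have key : D (B v) = e (D v) := by
      simp only [hD, LinearMap.sub_apply, LinearMap.id_apply, heapp, hA, LinearMap.add_apply]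
      simp only [map_sub, hcomm, hidem]
      abel
    calc (e.symm.toLinearMap ∘ₗ D ∘ₗ B) v = e.symm (D (B v)) := rfl
      _ = e.symm (e (D v)) := by rw [key]
      _ = D v := e.symm_apply_apply _
  · apply LinearMap.ext
    intro v
    have : D (P v) = 0 := by simp [hD, hidem v]
    calc ((e.symm.toLinearMap ∘ₗ D) ∘ₗ P) v = e.symm (D (P v)) := rfl
      _ = 0 := by rw [this]; simp
end C

section Spectral2
variable {V : Type*} [AddCommGroup V] [Module ℂ V] [FiniteDimensional ℂ V]

lemma mem_of_maxGen {B f : V →ₗ[ℂ] V} {W : Submodule ℂ V}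
    (h : ∀ μ : ℂ, ∀ v ∈ Module.End.maxGenEigenspace B μ, f v ∈ W) : ∀ v, f v ∈ W := by
  have htop := Module.End.iSup_maxGenEigenspace_eq_top (f := (B : Module.End ℂ V))
  have h2 : ⊤ ≤ W.comap f := by
    rw [← htop]; exact iSup_le fun μ v hv => h μ v hv
  exact fun v => h2 Submodule.mem_top

lemma IsGenZeroProj.mem_range {B P : V →ₗ[ℂ] V} (hP : IsGenZeroProj B P) (v : V) :
    P v ∈ Module.End.maxGenEigenspace B 0 := by
  refine mem_of_maxGen (B := B) ?_ v
  intro μ v hv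
  rcases eq_or_ne μ 0 with rfl | hμ
  · rw [hP.1 v hv]; exact hv
  · rw [hP.2 μ hμ v hv]; exact Submodule.zero_mem _

lemma IsGenZeroProj.pow_comp {B P : V →ₗ[ℂ] V} (hP : IsGenZeroProj B P) :
    (B ^ (Module.finrank ℂ V)) ∘ₗ P = 0 := by
  apply LinearMap.ext
  intro v
  have h0 := hP.mem_range v
  rw [Module.End.maxGenEigenspace_eq_genEigenspace_finrank,
    Module.End.mem_genEigenspace_nat] at h0
  simpa using h0

end Spectral2

open DirectSum

section Graded
attribute [local instance] GrC.addCommGroup'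
variable {V : Type*} [AddCommGroup V] [Module ℂ V] (Vf : ℤ → Submodule ℂ V)

lemma grMap_lof (A : V →ₗ[ℂ] V) (hA : ∀ p : ℤ, ∀ v ∈ Vf p, A v ∈ Vf p) (p : ℤ)
    (x : GrC Vf p) :
    grMap Vf A hA (DirectSum.lof ℂ ℤ (fun r => GrC Vf r) p x)
      = DirectSum.lof ℂ ℤ (fun r => GrC Vf r) p (grComponent Vf A hA p x) :=
  DirectSum.toModule_lof ℂ p x

lemma grComponent_mk (A : V →ₗ[ℂ] V) (hA : ∀ p : ℤ, ∀ v ∈ Vf p, A v ∈ Vf p) (p : ℤ)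
    (v : Vf p) :
    grComponent Vf A hA p (Submodule.Quotient.mk v)
      = Submodule.Quotient.mk ⟨A v, hA p v v.2⟩ := by
  simp only [grComponent, Submodule.mapQ_apply]
  rfl

lemma gr_ext {N : Type*} [AddCommMonoid N] [Module ℂ N]
    {f g : (⨁ p : ℤ, GrC Vf p) →ₗ[ℂ] N}
    (h : ∀ p : ℤ, ∀ v : Vf p,
      f (DirectSum.lof ℂ ℤ (fun r => GrC Vf r) p (Submodule.Quotient.mk v))
        = g (DirectSum.lof ℂ ℤ (fun r => GrC Vf r) p (Submodule.Quotient.mk v))) : f = g := by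
  refine DirectSum.linearMap_ext _ fun p => ?_
  apply LinearMap.ext
  intro x
  obtain ⟨v, rfl⟩ := Submodule.Quotient.mk_surjective _ x
  exact h p v

lemma grMap_comp (A A' : V →ₗ[ℂ] V) (hA : ∀ p : ℤ, ∀ v ∈ Vf p, A v ∈ Vf p)
    (hA' : ∀ p : ℤ, ∀ v ∈ Vf p, A' v ∈ Vf p)
    (hC : ∀ p : ℤ, ∀ v ∈ Vf p, (A ∘ₗ A') v ∈ Vf p) :
    grMap Vf (A ∘ₗ A') hC = grMap Vf A hA ∘ₗ grMap Vf A' hA' := by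
  apply gr_ext
  intro p v
  simp only [LinearMap.comp_apply, grMap_lof, grComponent_mk]

lemma grMap_congr {A A' : V →ₗ[ℂ] V} (h : A = A') (hA : ∀ p : ℤ, ∀ v ∈ Vf p, A v ∈ Vf p)
    (hA' : ∀ p : ℤ, ∀ v ∈ Vf p, A' v ∈ Vf p) : grMap Vf A hA = grMap Vf A' hA' := by
  subst h; rfl

lemma grMap_id (h : ∀ p : ℤ, ∀ v ∈ Vf p, (LinearMap.id : V →ₗ[ℂ] V) v ∈ Vf p) :
    grMap Vf LinearMap.id h = LinearMap.id := by
  apply gr_ext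
  intro p v
  simp only [grMap_lof, grComponent_mk, LinearMap.id_apply]

lemma grMap_zero (h : ∀ p : ℤ, ∀ v ∈ Vf p, (0 : V →ₗ[ℂ] V) v ∈ Vf p) :
    grMap Vf 0 h = 0 := by
  apply gr_ext
  intro p v
  have h0 : (⟨(0 : V →ₗ[ℂ] V) (v : V), h p v v.2⟩ : Vf p) = 0 := Subtype.ext (by simp)
  rw [grMap_lof, grComponent_mk, h0]
  simp

lemma grMap_sub (A A' : V →ₗ[ℂ] V) (hA : ∀ p : ℤ, ∀ v ∈ Vf p, A v ∈ Vf p)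
    (hA' : ∀ p : ℤ, ∀ v ∈ Vf p, A' v ∈ Vf p)
    (hS : ∀ p : ℤ, ∀ v ∈ Vf p, (A - A') v ∈ Vf p) :
    grMap Vf (A - A') hS = grMap Vf A hA - grMap Vf A' hA' := by
  apply gr_ext
  intro p v
  simp only [LinearMap.sub_apply, grMap_lof, grComponent_mk]
  rw [← map_sub, ← Submodule.Quotient.mk_sub]
  congr 1

lemma pow_fp (B : V →ₗ[ℂ] V) (hB : ∀ p : ℤ, ∀ v ∈ Vf p, B v ∈ Vf p) (n : ℕ) :
    ∀ p : ℤ, ∀ v ∈ Vf p, (B ^ n) v ∈ Vf p := by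
  induction n with
  | zero => intro p v hv; simpa using hv
  | succ n ih =>
    intro p v hv
    rw [pow_succ, Module.End.mul_apply]
    exact ih p _ (hB p v hv)

lemma grMap_pow (B : V →ₗ[ℂ] V) (hB : ∀ p : ℤ, ∀ v ∈ Vf p, B v ∈ Vf p) (n : ℕ) :
    grMap Vf (B ^ n) (pow_fp Vf B hB n) = (grMap Vf B hB) ^ n := by
  induction n with
  | zero =>
    have h1 : grMap Vf (B ^ 0) (pow_fp Vf B hB 0)
        = grMap Vf LinearMap.id (fun p v hv => by simpa using hv) :=
      grMap_congr Vf (by simp [Module.End.one_eq_id]) _ _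
    rw [h1, grMap_id, pow_zero, Module.End.one_eq_id]
  | succ n ih =>
    have h1 : grMap Vf (B ^ (n + 1)) (pow_fp Vf B hB (n + 1))
        = grMap Vf ((B ^ n) ∘ₗ B) (fun p v hv => pow_fp Vf B hB n p _ (hB p v hv)) :=
      grMap_congr Vf (by rw [pow_succ]; rfl) _ _
    rw [h1, grMap_comp Vf (B ^ n) B (pow_fp Vf B hB n) hB, ih, pow_succ]
    rfl

end Graded

section GrFsec
attribute [local instance] GrC.addCommGroup'
variable {V : Type*} [AddCommGroup V] [Module ℂ V] (Vf : ℤ → Submodule ℂ V)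

lemma range_lof_le_GrF {q p : ℤ} (h : q ≤ p) :
    LinearMap.range (DirectSum.lof ℂ ℤ (fun r => GrC Vf r) p) ≤ GrF Vf q :=
  le_iSup_of_le p (le_iSup_of_le h le_rfl)

lemma GrF_anti {q q' : ℤ} (h : q' ≤ q) : GrF Vf q ≤ GrF Vf q' :=
  iSup_le fun p => iSup_le fun hp => range_lof_le_GrF Vf (le_trans h hp)

lemma map_GrF_le {N : Type*} [AddCommGroup N] [Module ℂ N]
    (f : (⨁ p : ℤ, GrC Vf p) →ₗ[ℂ] N) (T : Submodule ℂ N) (q : ℤ)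
    (h : ∀ p : ℤ, q ≤ p → ∀ x : GrC Vf p, f (DirectSum.lof ℂ ℤ (fun r => GrC Vf r) p x) ∈ T) :
    Submodule.map f (GrF Vf q) ≤ T := by
  rw [Submodule.map_le_iff_le_comap, GrF]
  refine iSup_le fun p => iSup_le fun hp => ?_
  rintro _ ⟨x, rfl⟩
  exact h p hp x

lemma mem_GrF_apply {N : Type*} [AddCommGroup N] [Module ℂ N]
    {f : (⨁ p : ℤ, GrC Vf p) →ₗ[ℂ] N} {T : Submodule ℂ N} {q : ℤ}
    (h : ∀ p : ℤ, q ≤ p → ∀ x : GrC Vf p, f (DirectSum.lof ℂ ℤ (fun r => GrC Vf r) p x) ∈ T)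
    {x : ⨁ p : ℤ, GrC Vf p} (hx : x ∈ GrF Vf q) : f x ∈ T :=
  map_GrF_le Vf f T q h ⟨x, hx, rfl⟩

lemma GrC_subsingleton {p : ℤ} (h : ∀ v : Vf p, (v : V) ∈ Vf (p + 1)) :
    Subsingleton (GrC Vf p) := by
  rw [Submodule.Quotient.subsingleton_iff, eq_top_iff]
  intro v _
  exact h v

lemma GrC_subsingleton_low {a : ℤ} (hanti : Antitone Vf) (htop : Vf a = ⊤) {p : ℤ}
    (hp : p < a) : Subsingleton (GrC Vf p) := by
  refine GrC_subsingleton Vf fun v => ?_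
  have : Vf a ≤ Vf (p + 1) := hanti (by omega)
  exact this (htop ▸ Submodule.mem_top)

lemma GrC_subsingleton_high {b : ℤ} (hanti : Antitone Vf) (hbot : Vf b = ⊥) {p : ℤ}
    (hp : b ≤ p) : Subsingleton (GrC Vf p) := by
  refine GrC_subsingleton Vf fun v => ?_
  have h0 : (v : V) ∈ (⊥ : Submodule ℂ V) := hbot ▸ (hanti hp v.2)
  rw [Submodule.mem_bot] at h0
  rw [h0]
  exact Submodule.zero_mem _

lemma range_lof_eq_bot {p : ℤ} (h : Subsingleton (GrC Vf p)) :
    LinearMap.range (DirectSum.lof ℂ ℤ (fun r => GrC Vf r) p) = ⊥ := by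
  rw [eq_bot_iff]
  rintro _ ⟨x, rfl⟩
  rw [Subsingleton.elim x 0, map_zero]
  exact Submodule.zero_mem _

lemma GrF_eq_top {a : ℤ} (hanti : Antitone Vf) (htop : Vf a = ⊤) {q : ℤ} (hq : q ≤ a) :
    GrF Vf q = ⊤ := by
  rw [eq_top_iff]
  intro x _
  induction x using DirectSum.induction_on with
  | zero => exact Submodule.zero_mem _
  | of p y =>
    rcases le_or_gt q p with hqp | hqp
    · exact range_lof_le_GrF Vf hqp ⟨y, rfl⟩
    · have hsub : Subsingleton (GrC Vf p) :=
        GrC_subsingleton_low Vf hanti htop (by omega)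
      rw [Subsingleton.elim y 0, map_zero]
      exact Submodule.zero_mem _
  | add x y hx hy => exact Submodule.add_mem _ (hx Submodule.mem_top) (hy Submodule.mem_top)

lemma GrF_eq_bot {b : ℤ} (hanti : Antitone Vf) (hbot : Vf b = ⊥) {q : ℤ} (hq : b ≤ q) :
    GrF Vf q = ⊥ := by
  rw [eq_bot_iff]
  refine iSup_le fun p => iSup_le fun hp => ?_
  rw [range_lof_eq_bot Vf (GrC_subsingleton_high Vf hanti hbot (by omega))]

lemma GrF_succ (q : ℤ) :
    GrF Vf q = LinearMap.range (DirectSum.lof ℂ ℤ (fun r => GrC Vf r) q) ⊔ GrF Vf (q + 1) := by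
  apply le_antisymm
  · refine iSup_le fun p => iSup_le fun hp => ?_
    rcases eq_or_lt_of_le hp with rfl | hlt
    · exact le_sup_left
    · exact le_sup_of_le_right (range_lof_le_GrF Vf (by omega))
  · exact sup_le (range_lof_le_GrF Vf le_rfl) (GrF_anti Vf (by omega))

lemma gr_finiteDimensional [FiniteDimensional ℂ V] {a b : ℤ} (hanti : Antitone Vf)
    (htop : Vf a = ⊤) (hbot : Vf b = ⊥) :
    FiniteDimensional ℂ (⨁ p : ℤ, GrC Vf p) := by
  set S : Submodule ℂ (⨁ p : ℤ, GrC Vf p) :=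
    ⨆ p : (Finset.Icc a b : Finset ℤ), LinearMap.range (DirectSum.lof ℂ ℤ (fun r => GrC Vf r) (p : ℤ))
    with hS
  have hStop : S = ⊤ := by
    rw [eq_top_iff]
    intro x _
    induction x using DirectSum.induction_on with
    | zero => exact Submodule.zero_mem _
    | of p y =>
      by_cases hp : p ∈ Finset.Icc a b
      · exact le_iSup (fun p : (Finset.Icc a b : Finset ℤ) =>
          LinearMap.range (DirectSum.lof ℂ ℤ (fun r => GrC Vf r) (p : ℤ))) ⟨p, hp⟩ ⟨y, rfl⟩
      · rw [Finset.mem_Icc, not_and_or, not_le, not_le] at hp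
        have hsub : Subsingleton (GrC Vf p) := by
          rcases hp with hp | hp
          · exact GrC_subsingleton_low Vf hanti htop hp
          · exact GrC_subsingleton_high Vf hanti hbot (by omega)
        rw [Subsingleton.elim y 0, map_zero]
        exact Submodule.zero_mem _
    | add x y hx hy => exact Submodule.add_mem _ (hx Submodule.mem_top) (hy Submodule.mem_top)
  have : FiniteDimensional ℂ S := by
    infer_instance
  rw [hStop] at this
  exact Submodule.topEquiv.finiteDimensional

end GrFsec

section GrProj
attribute [local instance] GrC.addCommGroup'
variable {V : Type*} [AddCommGroup V] [Module ℂ V] [FiniteDimensional ℂ V]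

lemma IsGenZeroProj.grMap_proj {B P : V →ₗ[ℂ] V} (hP : IsGenZeroProj B P)
    (Vf : ℤ → Submodule ℂ V) (hB : ∀ p : ℤ, ∀ v ∈ Vf p, B v ∈ Vf p)
    (hPfp : ∀ p : ℤ, ∀ v ∈ Vf p, P v ∈ Vf p) :
    IsGenZeroProj (V := ⨁ p : ℤ, GrC Vf p) (grMap Vf B hB) (grMap Vf P hPfp) := by
  obtain ⟨C, hCfp, hCB, hCP⟩ := hP.exists_C Vf hB
  have hidfp : ∀ p : ℤ, ∀ v ∈ Vf p, (LinearMap.id : V →ₗ[ℂ] V) v ∈ Vf p := fun p v hv => hv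
  have h0fp : ∀ p : ℤ, ∀ v ∈ Vf p, (0 : V →ₗ[ℂ] V) v ∈ Vf p := fun p v _ => by
    simpa using Submodule.zero_mem (Vf p)
  have hsubfp : ∀ p : ℤ, ∀ v ∈ Vf p, ((LinearMap.id - P : V →ₗ[ℂ] V)) v ∈ Vf p := fun p v hv => by
    simpa using Submodule.sub_mem (Vf p) hv (hPfp p v hv)
  have hCBfp : ∀ p : ℤ, ∀ v ∈ Vf p, (C ∘ₗ B) v ∈ Vf p := fun p v hv => hCfp p _ (hB p v hv)
  have hCPfp : ∀ p : ℤ, ∀ v ∈ Vf p, (C ∘ₗ P) v ∈ Vf p := fun p v hv => hCfp p _ (hPfp p v hv)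
  have hPPfp : ∀ p : ℤ, ∀ v ∈ Vf p, (P ∘ₗ P) v ∈ Vf p := fun p v hv => hPfp p _ (hPfp p v hv)
  have hPBfp : ∀ p : ℤ, ∀ v ∈ Vf p, (P ∘ₗ B) v ∈ Vf p := fun p v hv => hPfp p _ (hB p v hv)
  have hBPfp : ∀ p : ℤ, ∀ v ∈ Vf p, (B ∘ₗ P) v ∈ Vf p := fun p v hv => hB p _ (hPfp p v hv)
  -- gr of the relations
  have e3 : grMap Vf (LinearMap.id - P) hsubfp = LinearMap.id - grMap Vf P hPfp := by
    rw [grMap_sub Vf LinearMap.id P hidfp hPfp hsubfp, grMap_id]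
  have hgrCB : grMap Vf C hCfp ∘ₗ grMap Vf B hB = LinearMap.id - grMap Vf P hPfp :=
    (grMap_comp Vf C B hCfp hB hCBfp).symm.trans
      ((grMap_congr Vf hCB hCBfp hsubfp).trans e3)
  have hgrCP : grMap Vf C hCfp ∘ₗ grMap Vf P hPfp = 0 :=
    (grMap_comp Vf C P hCfp hPfp hCPfp).symm.trans
      ((grMap_congr Vf hCP hCPfp h0fp).trans (grMap_zero Vf h0fp))
  have hQidem : grMap Vf P hPfp ∘ₗ grMap Vf P hPfp = grMap Vf P hPfp :=
    (grMap_comp Vf P P hPfp hPfp hPPfp).symm.trans (grMap_congr Vf hP.idem' hPPfp hPfp)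
  have hQG : grMap Vf P hPfp ∘ₗ grMap Vf B hB = grMap Vf B hB ∘ₗ grMap Vf P hPfp :=
    (grMap_comp Vf P B hPfp hB hPBfp).symm.trans
      ((grMap_congr Vf hP.comm' hPBfp hBPfp).trans (grMap_comp Vf B P hB hPfp hBPfp))
  set n := Module.finrank ℂ V with hn
  have hBnPfp : ∀ p : ℤ, ∀ v ∈ Vf p, ((B ^ n) ∘ₗ P) v ∈ Vf p := fun p v hv =>
    pow_fp Vf B hB n p _ (hPfp p v hv)
  have hGnQ : (grMap Vf B hB ^ n) ∘ₗ grMap Vf P hPfp = 0 := by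
    have e1 : grMap Vf ((B ^ n) ∘ₗ P) hBnPfp
        = grMap Vf (B ^ n) (pow_fp Vf B hB n) ∘ₗ grMap Vf P hPfp :=
      grMap_comp Vf (B ^ n) P (pow_fp Vf B hB n) hPfp hBnPfp
    have e2 : grMap Vf ((B ^ n) ∘ₗ P) hBnPfp = 0 :=
      (grMap_congr Vf hP.pow_comp hBnPfp h0fp).trans (grMap_zero Vf h0fp)
    rw [← grMap_pow Vf B hB n, ← e1, e2]
  constructor
  · -- identity on generalized 0 eigenspace
    intro v hv
    rw [Module.End.mem_maxGenEigenspace] at hv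
    obtain ⟨k, hk⟩ := hv
    have hk' : ((grMap Vf B hB) ^ k) v = 0 := by convert hk using 3; ext x; simp
    clear hk
    induction k generalizing v with
    | zero =>
      have : v = 0 := by simpa using hk'
      rw [this, map_zero]
    | succ k ih =>
      have h1 : ((grMap Vf B hB) ^ k) (grMap Vf B hB v) = 0 := by
        rw [← Module.End.mul_apply, ← pow_succ]
        exact hk'
      have h2 := ih _ h1
      have h3 : v - grMap Vf P hPfp v = grMap Vf C hCfp (grMap Vf B hB v) := by
        have := LinearMap.ext_iff.mp hgrCB v
        simpa [LinearMap.comp_apply, LinearMap.sub_apply] using this.symm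
      have h4 : grMap Vf C hCfp (grMap Vf B hB v) = 0 := by
        rw [← h2]
        exact LinearMap.ext_iff.mp hgrCP _
      have h5 : v - grMap Vf P hPfp v = 0 := h3.trans h4
      have := sub_eq_zero.mp h5
      exact this.symm
  · intro μ hμ v hv
    rw [Module.End.mem_maxGenEigenspace] at hv
    obtain ⟨k, hk⟩ := hv
    have hcQG : Commute (grMap Vf B hB - μ • (1 : Module.End ℂ (⨁ p : ℤ, GrC Vf p)))
        (grMap Vf P hPfp) := by
      have h1 : Commute (grMap Vf P hPfp) (grMap Vf B hB) := hQG
      exact Commute.sub_left (R := Module.End ℂ (⨁ p : ℤ, GrC Vf p)) (h1.symm) ((Commute.one_left (grMap Vf P hPfp)).smul_left μ)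
    have hmu : ((grMap Vf B hB - μ • 1) ^ k) (grMap Vf P hPfp v) = 0 := by
      rw [← Module.End.mul_apply, (hcQG.pow_left k).eq, Module.End.mul_apply, hk, map_zero]
    have h0 : ((grMap Vf B hB) ^ n) (grMap Vf P hPfp v) = 0 :=
      LinearMap.ext_iff.mp hGnQ v
    have hd := Module.End.disjoint_genEigenspace (f := grMap Vf B hB) hμ
      (⊤ : ℕ∞) (⊤ : ℕ∞)
    refine (Submodule.mem_bot ℂ).mp (hd.le_bot (Submodule.mem_inf.mpr ⟨?_, ?_⟩))
    · exact Module.End.mem_maxGenEigenspace _ _ _ |>.mpr ⟨k, hmu⟩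
    · exact Module.End.mem_maxGenEigenspace _ _ _ |>.mpr ⟨n, by convert h0 using 3; ext x; simp⟩

end GrProj


/-- Let `V` be a finite-dimensional complex vector space with a finite descending
filtration, `□ : V → V` filtration preserving, `P` resp. `P̃` the spectral projections of `□` resp.
`gr(□)` onto the generalized zero eigenspaces, and `S : gr(V) → V` a splitting of the filtration.
Then `L := P∘S∘P̃ + (id − P)∘S∘(id − P̃)` is a filtration preserving bijection whose inverse is
filtration preserving, `gr(L) = id`, and `L⁻¹∘P∘L = P̃`.  In particular `L` restricts to linear
isomorphisms `im(P̃) ≅ im(P)` and `ker(P̃) ≅ ker(P)`. -/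
theorem statement2 {V : Type*} [AddCommGroup V] [Module ℂ V] [FiniteDimensional ℂ V]
    (a b : ℤ) (hab : a ≤ b)
    (Vf : ℤ → Submodule ℂ V) (hanti : Antitone Vf) (htop : Vf a = ⊤) (hbot : Vf b = ⊥)
    (Box : V →ₗ[ℂ] V) (hBox : ∀ p : ℤ, ∀ v ∈ Vf p, Box v ∈ Vf p)
    (P : V →ₗ[ℂ] V) (hP : IsGenZeroProj Box P)
    (Ptil : (⨁ p : ℤ, GrC Vf p) →ₗ[ℂ] ⨁ p : ℤ, GrC Vf p)
    (hPtil : IsGenZeroProj (V := ⨁ p : ℤ, GrC Vf p) (grMap Vf Box hBox) Ptil)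
    (S : (⨁ p : ℤ, GrC Vf p) →ₗ[ℂ] V)
    (hS : ∀ p : ℤ, ∀ v : Vf p,
      S (DirectSum.lof ℂ ℤ (fun r => GrC Vf r) p (Submodule.Quotient.mk v)) ∈ Vf p ∧
      S (DirectSum.lof ℂ ℤ (fun r => GrC Vf r) p (Submodule.Quotient.mk v)) - (v : V)
        ∈ Vf (p + 1)) :
    ∃ Linv : V →ₗ[ℂ] ⨁ p : ℤ, GrC Vf p,
      Linv ∘ₗ Lop Vf P Ptil S = LinearMap.id ∧
      Lop Vf P Ptil S ∘ₗ Linv = LinearMap.id ∧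
      (∀ q : ℤ, Submodule.map (Lop Vf P Ptil S) (GrF Vf q) ≤ Vf q) ∧
      (∀ q : ℤ, Submodule.map Linv (Vf q) ≤ GrF Vf q) ∧
      (∀ p : ℤ, ∀ v : Vf p,
        Lop Vf P Ptil S (DirectSum.lof ℂ ℤ (fun r => GrC Vf r) p (Submodule.Quotient.mk v))
          - (v : V) ∈ Vf (p + 1)) ∧
      Linv ∘ₗ P ∘ₗ Lop Vf P Ptil S = Ptil ∧
      Submodule.map (Lop Vf P Ptil S) (LinearMap.range Ptil) = LinearMap.range P ∧
      Submodule.map (Lop Vf P Ptil S) (LinearMap.ker Ptil) = LinearMap.ker P := by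
  classical
  letI : ∀ p, AddCommGroup (GrC Vf p) := fun p => GrC.addCommGroup' Vf p
  haveI hFD : FiniteDimensional ℂ (⨁ p : ℤ, GrC Vf p) :=
    gr_finiteDimensional Vf hanti htop hbot
  have hPfp : ∀ p : ℤ, ∀ v ∈ Vf p, P v ∈ Vf p := fun p => hP.invariant' (hBox p)
  have hPidem : ∀ v : V, P (P v) = P v := fun v => LinearMap.ext_iff.mp hP.idem' v
  have hQproj := hP.grMap_proj Vf hBox hPfp
  have hPtilQ : Ptil = grMap Vf P hPfp := hPtil.unique hQproj
  have hPtil_lof : ∀ p : ℤ, ∀ v : Vf p,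
      Ptil (DirectSum.lof ℂ ℤ (fun r => GrC Vf r) p (Submodule.Quotient.mk v))
        = DirectSum.lof ℂ ℤ (fun r => GrC Vf r) p
            (Submodule.Quotient.mk ⟨P v, hPfp p v v.2⟩) := by
    intro p v
    rw [hPtilQ, grMap_lof, grComponent_mk]
  have hPtilGrF : ∀ q : ℤ, ∀ x ∈ GrF Vf q, Ptil x ∈ GrF Vf q := by
    intro q x hx
    rw [hPtilQ]
    refine mem_GrF_apply Vf (fun p hp y => ?_) hx
    rw [grMap_lof]
    exact range_lof_le_GrF Vf hp ⟨_, rfl⟩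
  have hPtilidem : ∀ x, Ptil (Ptil x) = Ptil x := fun x =>
    LinearMap.ext_iff.mp hPtil.idem' x
  have hSfp : ∀ p : ℤ, ∀ x : GrC Vf p, S (DirectSum.lof ℂ ℤ (fun r => GrC Vf r) p x) ∈ Vf p := by
    intro p x
    obtain ⟨v, rfl⟩ := Submodule.Quotient.mk_surjective _ x
    exact (hS p v).1
  have hSGrF : ∀ q : ℤ, ∀ x ∈ GrF Vf q, S x ∈ Vf q := by
    intro q x hx
    exact mem_GrF_apply Vf (fun p hp y => hanti hp (hSfp p y)) hx
  set L := Lop Vf P Ptil S with hL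
  have hLapp : ∀ x, L x = P (S (Ptil x)) + (S (x - Ptil x) - P (S (x - Ptil x))) := by
    intro x
    simp [hL, Lop, LinearMap.sub_apply, LinearMap.add_apply, LinearMap.comp_apply,
      LinearMap.id_apply]
  have hLfp : ∀ q : ℤ, ∀ x ∈ GrF Vf q, L x ∈ Vf q := by
    intro q x hx
    rw [hLapp]
    have h1 : Ptil x ∈ GrF Vf q := hPtilGrF q x hx
    have h2 : x - Ptil x ∈ GrF Vf q := Submodule.sub_mem _ hx h1
    exact Submodule.add_mem _ (hPfp q _ (hSGrF q _ h1))
      (Submodule.sub_mem _ (hSGrF q _ h2) (hPfp q _ (hSGrF q _ h2)))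
  have hgrL : ∀ p : ℤ, ∀ v : Vf p,
      L (DirectSum.lof ℂ ℤ (fun r => GrC Vf r) p (Submodule.Quotient.mk v)) - (v : V)
        ∈ Vf (p + 1) := by
    intro p v
    have hPv : P (v : V) ∈ Vf p := hPfp p _ v.2
    set x := DirectSum.lof ℂ ℤ (fun r => GrC Vf r) p (Submodule.Quotient.mk v) with hxdef
    set v0 : Vf p := ⟨P (v : V), hPv⟩ with hv0
    set v1 : Vf p := ⟨(v : V) - P (v : V), Submodule.sub_mem _ v.2 hPv⟩ with hv1
    have hQx : Ptil x = DirectSum.lof ℂ ℤ (fun r => GrC Vf r) p (Submodule.Quotient.mk v0) :=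
      hPtil_lof p v
    have hx1 : x - Ptil x = DirectSum.lof ℂ ℤ (fun r => GrC Vf r) p
        (Submodule.Quotient.mk v1) := by
      rw [hQx, hxdef, ← map_sub, ← Submodule.Quotient.mk_sub]
      congr 1
    have h0 := hS p v0
    have h1 := hS p v1
    set s0 := S (DirectSum.lof ℂ ℤ (fun r => GrC Vf r) p (Submodule.Quotient.mk v0)) with hs0
    set s1 := S (DirectSum.lof ℂ ℤ (fun r => GrC Vf r) p (Submodule.Quotient.mk v1)) with hs1
    have hLx : L x = P s0 + (s1 - P s1) := by
      rw [hLapp, hx1, hQx]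
    have m1 : P s0 - P (v : V) ∈ Vf (p + 1) := by
      have := hPfp (p + 1) _ h0.2
      rwa [map_sub, hPidem] at this
    have m2 : s1 - ((v : V) - P (v : V)) ∈ Vf (p + 1) := h1.2
    have m3 : P s1 ∈ Vf (p + 1) := by
      have := hPfp (p + 1) _ h1.2
      rw [map_sub, map_sub, hPidem] at this
      simpa using this
    have key : L x - (v : V) = (P s0 - P (v : V)) + ((s1 - ((v : V) - P (v : V))) - P s1) := by
      rw [hLx]; abel
    rw [key]
    exact Submodule.add_mem _ m1 (Submodule.sub_mem _ m2 m3)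
  -- surjectivity onto each filtration step
  have surjclaim : ∀ k : ℕ, ∀ q : ℤ, q = b - (k : ℤ) →
      Vf q ≤ Submodule.map L (GrF Vf q) := by
    intro k
    induction k with
    | zero =>
      intro q hq v hv
      have hv' : v ∈ Vf b := by rw [← show q = b by omega]; exact hv
      rw [hbot, Submodule.mem_bot] at hv'
      rw [hv']
      exact Submodule.zero_mem _
    | succ k ih =>
      intro q hq v hv
      have h5 := hgrL q ⟨v, hv⟩
      obtain ⟨y, hy, hLy⟩ := ih (q + 1) (by omega) h5
      refine ⟨DirectSum.lof ℂ ℤ (fun r => GrC Vf r) q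
        (Submodule.Quotient.mk ⟨v, hv⟩) - y,
        Submodule.sub_mem _ (range_lof_le_GrF Vf le_rfl ⟨_, rfl⟩)
          (GrF_anti Vf (show q ≤ q + 1 by omega) hy), ?_⟩
      rw [map_sub, hLy]
      simp
  have injclaim : ∀ k : ℕ, ∀ q : ℤ, q = b - (k : ℤ) → ∀ x ∈ GrF Vf q, L x = 0 → x = 0 := by
    intro k
    induction k with
    | zero =>
      intro q hq x hx _
      have hx' : x ∈ GrF Vf b := by rw [← show q = b by omega]; exact hx
      rw [GrF_eq_bot Vf hanti hbot le_rfl] at hx'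
      exact (Submodule.mem_bot ℂ).mp hx'
    | succ k ih =>
      intro q hq x hx hL0
      rw [GrF_succ] at hx
      obtain ⟨x1, hx1, x2, hx2, rfl⟩ := Submodule.mem_sup.mp hx
      obtain ⟨y, rfl⟩ := hx1
      obtain ⟨v, rfl⟩ := Submodule.Quotient.mk_surjective _ y
      have hLx2 : L x2 ∈ Vf (q + 1) := hLfp _ x2 hx2
      have h5 := hgrL q v
      have hsum : L (DirectSum.lof ℂ ℤ (fun r => GrC Vf r) q
          (Submodule.Quotient.mk v)) + L x2 = 0 := by
        rw [← map_add]; exact hL0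
      have hvmem : (v : V) ∈ Vf (q + 1) := by
        have hid : (v : V) = -(L (DirectSum.lof ℂ ℤ (fun r => GrC Vf r) q
            (Submodule.Quotient.mk v)) - (v : V)) - L x2
            + (L (DirectSum.lof ℂ ℤ (fun r => GrC Vf r) q
            (Submodule.Quotient.mk v)) + L x2) := by abel
        rw [hid, hsum, add_zero]
        exact Submodule.sub_mem _ (Submodule.neg_mem _ h5) hLx2
      have hy0 : (Submodule.Quotient.mk v : GrC Vf q) = 0 := by
        rw [Submodule.Quotient.mk_eq_zero]
        simp only [Submodule.mem_comap, Submodule.coe_subtype]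
        exact hvmem
      rw [hy0, map_zero, zero_add] at hL0 ⊢
      exact ih (q + 1) (by omega) x2 hx2 hL0
  have hker : ∀ x, L x = 0 → x = 0 := by
    intro x hx0
    refine injclaim (b - a).toNat a (by omega) x ?_ hx0
    rw [GrF_eq_top Vf hanti htop le_rfl]
    trivial
  have hLinj : Function.Injective L := by
    intro x y hxy
    have h0 : L (x - y) = 0 := by rw [map_sub, hxy, sub_self]
    exact sub_eq_zero.mp (hker _ h0)
  have hVfL : ∀ q : ℤ, Vf q ≤ Submodule.map L (GrF Vf q) := by
    intro q
    rcases le_or_gt q b with hqb | hqb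
    · exact surjclaim (b - q).toNat q (by omega)
    · intro v hv
      have hv' : v ∈ Vf b := hanti (le_of_lt hqb) hv
      rw [hbot, Submodule.mem_bot] at hv'
      rw [hv']
      exact Submodule.zero_mem _
  have hLsurj : Function.Surjective L := by
    intro v
    have hv : v ∈ Vf a := htop ▸ Submodule.mem_top
    obtain ⟨x, -, hx⟩ := hVfL a hv
    exact ⟨x, hx⟩
  set e := LinearEquiv.ofBijective L ⟨hLinj, hLsurj⟩ with he
  have heL : ∀ x, e x = L x := fun x => rfl
  -- the key intertwining relation
  have hPL : ∀ x, P (L x) = L (Ptil x) := by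
    intro x
    have lhs : P (L x) = P (S (Ptil x)) := by
      rw [hLapp, map_add, map_sub, hPidem, hPidem]
      abel
    have rhs : L (Ptil x) = P (S (Ptil x)) := by
      rw [hLapp, hPtilidem, sub_self, map_zero, map_zero]
      simp
    rw [lhs, rhs]
  refine ⟨e.symm.toLinearMap, ?_, ?_, ?_, ?_, hgrL, ?_, ?_, ?_⟩
  · exact LinearMap.ext fun x => e.symm_apply_apply x
  · exact LinearMap.ext fun v => e.apply_symm_apply v
  · exact fun q => Submodule.map_le_iff_le_comap.mpr fun x hx => hLfp q x hx
  · intro q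
    rintro _ ⟨v, hv, rfl⟩
    obtain ⟨x, hx, hLx⟩ := hVfL q hv
    have hsx : e.symm v = x := by rw [← hLx]; exact e.symm_apply_apply x
    simpa [hsx] using hx
  · apply LinearMap.ext
    intro x
    have : P (L x) = L (Ptil x) := hPL x
    calc (e.symm.toLinearMap ∘ₗ P ∘ₗ L) x = e.symm (P (L x)) := rfl
      _ = e.symm (L (Ptil x)) := by rw [this]
      _ = Ptil x := e.symm_apply_apply _
  · apply le_antisymm
    · rintro _ ⟨_, ⟨y, rfl⟩, rfl⟩
      exact ⟨L y, hPL y⟩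
    · rintro _ ⟨v, rfl⟩
      obtain ⟨x, hx⟩ := hLsurj v
      refine ⟨Ptil x, ⟨x, rfl⟩, ?_⟩
      rw [← hPL x, hx]
  · apply le_antisymm
    · rintro _ ⟨x, hx, rfl⟩
      simp only [SetLike.mem_coe, LinearMap.mem_ker] at hx ⊢
      rw [hPL x, hx, map_zero]
    · intro v hv
      simp only [SetLike.mem_coe, LinearMap.mem_ker] at hv
      obtain ⟨x, rfl⟩ := hLsurj v
      refine ⟨x, ?_, rfl⟩
      simp only [SetLike.mem_coe, LinearMap.mem_ker]
      apply hLinj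
      rw [map_zero, ← hPL x, hv]
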